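/- arXiv:1612.03643 — 3 statements merged into one kernel-verified Lean document; each statement's English description precedes it below -/
import Mathlib

section
/- Let 𝛁 be a torsion-free flat connection on the tangent bundle of a manifold N and let e be a vector field such that the pair (𝛁, e) is regular, with Q(x) = 𝛁_x e. Then the multiplication defined by x⋆y = −Q^{-1}(𝛁_x𝛁_y e) + 𝛁_x y is commutative: x⋆y = y⋆x for all vector fields x, y. -/
universe u v

/-- Abstract model of the holomorphic vector fields on a complex manifold:
`A` is the commutative `ℂ`-algebra of holomorphic functions and `X` is the
`A`-module of vector fields, equipped with a Lie bracket and with an action of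
vector fields on functions by derivations. -/
structure VectorFields (A : Type u) (X : Type v) [CommRing A] [Algebra ℂ A]
    [AddCommGroup X] [Module A X] where
  bracket : X → X → X
  act : X → A → A
  bracket_add_left : ∀ x y z : X, bracket (x + y) z = bracket x z + bracket y z
  bracket_antisymm : ∀ x y : X, bracket x y = - bracket y x
  jacobi : ∀ x y z : X,
    bracket x (bracket y z) + bracket y (bracket z x) + bracket z (bracket x y) = 0
  act_add_left : ∀ (x y : X) (f : A), act (x + y) f = act x f + act y f
  act_smul_left : ∀ (f : A) (x : X) (g : A), act (f • x) g = f * act x g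
  act_add_right : ∀ (x : X) (f g : A), act x (f + g) = act x f + act x g
  act_mul_right : ∀ (x : X) (f g : A), act x (f * g) = act x f * g + f * act x g
  act_algebraMap : ∀ (x : X) (c : ℂ), act x (algebraMap ℂ A c) = 0
  bracket_smul_right : ∀ (x : X) (f : A) (y : X),
    bracket x (f • y) = act x f • y + f • bracket x y
  act_bracket : ∀ (x y : X) (f : A),
    act (bracket x y) f = act x (act y f) - act y (act x f)

variable {A : Type u} {X : Type v} [CommRing A] [Algebra ℂ A]
  [AddCommGroup X] [Module A X]

/-- A torsion-free flat connection on the tangent bundle: `ℂ`-bilinear,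
`O`-linear in the first argument, Leibniz in the second, with vanishing
torsion and vanishing curvature. -/
structure IsTFFlatConnection (V : VectorFields A X) (conn : X → X → X) : Prop where
  add_left : ∀ x y z : X, conn (x + y) z = conn x z + conn y z
  smul_left : ∀ (f : A) (x y : X), conn (f • x) y = f • conn x y
  add_right : ∀ x y z : X, conn x (y + z) = conn x y + conn x z
  leibniz : ∀ (x : X) (f : A) (y : X), conn x (f • y) = V.act x f • y + f • conn x y
  torsion_free : ∀ x y : X, conn x y - conn y x = V.bracket x y
  flat : ∀ x y z : X, conn x (conn y z) - conn y (conn x z) = conn (V.bracket x y) z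

/-- An `O`-bilinear, commutative, associative multiplication on vector fields
with unit `e`. -/
structure IsUnitalMul (mul : X → X → X) (e : X) : Prop where
  add_left : ∀ x y z : X, mul (x + y) z = mul x z + mul y z
  smul_left : ∀ (f : A) (x y : X), mul (f • x) y = f • mul x y
  comm : ∀ x y : X, mul x y = mul y x
  assoc : ∀ x y z : X, mul (mul x y) z = mul x (mul y z)
  unit : ∀ x : X, mul e x = x

/-- A Saito structure (without metric) on a manifold, with connection `conn`,
multiplication `mul` with unit `e`, and Euler vector field `E`. -/
structure IsSaitoStructure (V : VectorFields A X) (conn mul : X → X → X) (e E : X) :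
    Prop where
  conn_flat : IsTFFlatConnection V conn
  mul_unital : IsUnitalMul (A := A) mul e
  SS1 : ∀ x y z : X,
    conn x (mul y z) - mul y (conn x z) - conn y (mul x z) + mul x (conn y z)
      = mul (V.bracket x y) z
  SS2 : ∀ x y : X,
    V.bracket E (mul x y) - mul (V.bracket E x) y - mul x (V.bracket E y) = mul x y
  SS3 : ∀ x : X, conn x e = 0
  SS4 : ∀ x y : X, conn x (conn y E) - conn (conn x y) E = 0

/-- An almost Saito structure with parameter `r`, with connection `conn`,
multiplication `mul` with unit `E`, and nonzero vector field `e`. -/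
structure IsAlmostSaitoStructure (V : VectorFields A X) (conn mul : X → X → X)
    (e E : X) (r : ℂ) : Prop where
  conn_flat : IsTFFlatConnection V conn
  mul_unital : IsUnitalMul (A := A) mul E
  e_ne_zero : e ≠ 0
  ASS1 : ∀ x y z : X,
    conn x (mul y z) - mul y (conn x z) - conn y (mul x z) + mul x (conn y z)
      = mul (V.bracket x y) z
  ASS2 : ∀ x y : X,
    V.bracket e (mul x y) - mul (V.bracket e x) y - mul x (V.bracket e y)
      + mul e (mul x y) = 0
  ASS3 : ∀ x : X, conn x E = algebraMap ℂ A r • x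
  ASS4 : ∀ x y : X,
    conn x (conn y e) - conn (conn x y) e + conn (mul x y) e = 0

theorem Function.invFun_sub_invFun {G H : Type*} [AddGroup G] [AddGroup H] [Nonempty G]
    (f : G →+ H) (hf : Function.Bijective f) (a b : H) :
    Function.invFun f a - Function.invFun f b = Function.invFun f (a - b) := by
  apply hf.injective
  simp only [map_sub, Function.rightInverse_invFun hf.surjective _]

namespace IsTFFlatConnection

variable {V : VectorFields A X} {conn : X → X → X}

theorem conn_conn_sub_conn_conn (hconn : IsTFFlatConnection V conn) (x y z : X) :
    conn x (conn y z) - conn y (conn x z) = conn (conn x y - conn y x) z := by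
  rw [hconn.flat, hconn.torsion_free]

end IsTFFlatConnection

/-- Proposition 2.7 (1) of the paper: for a regular pair `(∇, e)`, the
multiplication `x ⋆ y = -Q⁻¹(∇ₓ∇_y e) + ∇ₓ y` (with `Q v = ∇_v e`) is
commutative. -/
theorem regular_pair_mul_comm
    (V : VectorFields A X) (conn : X → X → X)
    (hconn : IsTFFlatConnection V conn) (e : X)
    (hreg : Function.Bijective fun v : X => conn v e) :
    ∀ x y : X,
      - Function.invFun (fun v : X => conn v e) (conn x (conn y e)) + conn x y
        = - Function.invFun (fun v : X => conn v e) (conn y (conn x e)) + conn y x := by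
  intro x y
  let Q : X →+ X := AddMonoidHom.mk' (fun v => conn v e) fun u v => hconn.add_left u v e
  have key : Function.invFun Q (conn x (conn y e)) - Function.invFun Q (conn y (conn x e))
      = conn x y - conn y x := by
    rw [Function.invFun_sub_invFun Q hreg, hconn.conn_conn_sub_conn_conn]
    exact Function.leftInverse_invFun hreg.injective _
  rw [neg_add_eq_sub, neg_add_eq_sub, sub_eq_sub_iff_sub_eq_sub]
  exact key.symm
end

section
/- Let 𝛁 be a torsion-free flat connection on the tangent bundle of a manifold N and let e be a vector field such that the pair (𝛁, e) is regular, with Q(x) = 𝛁_x e. Define the multiplication x⋆y = −Q^{-1}(𝛁_x𝛁_y e) + 𝛁_x y. Then ⋆ is associative if and only if the condition (ASS1) 𝛁_x(y⋆z) − y⋆𝛁_x z − 𝛁_y(x⋆z) + x⋆𝛁_y z = [x,y]⋆z holds for all vector fields x, y, z. -/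
universe u v

variable {A : Type u} {X : Type v} [CommRing A] [Algebra ℂ A]
  [AddCommGroup X] [Module A X]

/-!
Write `Q v = ∇_v e`. The defining formula of `⋆` says exactly that
`Q (x ⋆ y) = Q (∇_x y) - ∇_x (Q y)`. Torsion-freeness and flatness (applied to `e`)
make `⋆` commutative, and applying `Q` to the defect of (ASS1) and using flatness twice
shows that this defect equals `x ⋆ (y ⋆ z) - y ⋆ (x ⋆ z)`. As `Q` is injective, (ASS1) is
therefore the left commutativity of `⋆`, which for a commutative operation is associativity.
-/

theorem assoc_iff_left_comm_of_comm {α : Type*} {mul : α → α → α}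
    (hcomm : ∀ x y, mul x y = mul y x) :
    (∀ x y z, mul (mul x y) z = mul x (mul y z)) ↔
      ∀ x y z, mul x (mul y z) = mul y (mul x z) := by
  constructor
  · intro hassoc x y z
    rw [← hassoc, hcomm x y, hassoc]
  · intro hleft x y z
    rw [hcomm, hleft, hcomm z y]

namespace IsTFFlatConnection

variable {V : VectorFields A X} {conn : X → X → X}

theorem conn_neg_left (hconn : IsTFFlatConnection V conn) (x z : X) :
    conn (-x) z = -conn x z :=
  map_neg (AddMonoidHom.mk' (conn · z) fun a b => hconn.add_left a b z) x

theorem conn_sub_left (hconn : IsTFFlatConnection V conn) (x y z : X) :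
    conn (x - y) z = conn x z - conn y z :=
  map_sub (AddMonoidHom.mk' (conn · z) fun a b => hconn.add_left a b z) x y

theorem conn_sub_right (hconn : IsTFFlatConnection V conn) (x y z : X) :
    conn x (y - z) = conn x y - conn x z :=
  map_sub (AddMonoidHom.mk' (conn x) (hconn.add_right x)) y z

theorem conn_bracket_left_eq (hconn : IsTFFlatConnection V conn) (x y z : X) :
    conn (V.bracket x y) z = conn (conn x y) z - conn (conn y x) z := by
  rw [← hconn.torsion_free, hconn.conn_sub_left]

variable {e : X} {mul : X → X → X}

theorem conn_mul_eq_of_eq_invFun (hconn : IsTFFlatConnection V conn)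
    (hsurj : Function.Surjective (conn · e))
    (hmul : ∀ x y, mul x y = -Function.invFun (conn · e) (conn x (conn y e)) + conn x y)
    (x y : X) : conn (mul x y) e = conn (conn x y) e - conn x (conn y e) := by
  rw [hmul, hconn.add_left, hconn.conn_neg_left, Function.invFun_eq (hsurj _)]
  abel

theorem mul_comm_of_conn_mul (hconn : IsTFFlatConnection V conn)
    (hinj : Function.Injective (conn · e))
    (hQmul : ∀ x y, conn (mul x y) e = conn (conn x y) e - conn x (conn y e)) (x y : X) :
    mul x y = mul y x := by
  apply hinj
  have hflat := hconn.flat x y e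
  rw [hconn.conn_bracket_left_eq] at hflat
  simp only [hQmul]
  rw [← sub_eq_zero, ← sub_eq_zero.mpr hflat.symm]
  abel

theorem ASS1_defect_eq_of_conn_mul (hconn : IsTFFlatConnection V conn)
    (hinj : Function.Injective (conn · e))
    (hQmul : ∀ x y, conn (mul x y) e = conn (conn x y) e - conn x (conn y e)) (x y z : X) :
    conn x (mul y z) - mul y (conn x z) - conn y (mul x z) + mul x (conn y z)
        - mul (V.bracket x y) z
      = mul x (mul y z) - mul y (mul x z) := by
  apply hinj
  have hflat_z := hconn.flat x y z
  have hflat_Qz := hconn.flat x y (conn z e)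
  apply_fun (conn · e) at hflat_z
  simp only [hconn.conn_sub_left, hconn.add_left, hQmul, hconn.conn_sub_right] at hflat_z ⊢
  rw [← hflat_z, ← hflat_Qz]
  abel

end IsTFFlatConnection

/-- Proposition 2.7 (2) of the paper: for a regular pair `(∇, e)`, the
multiplication `x ⋆ y = -Q⁻¹(∇ₓ∇_y e) + ∇ₓ y` (with `Q v = ∇_v e`) is
associative if and only if (ASS1) holds. -/
theorem regular_pair_mul_assoc_iff_ASS1
    (V : VectorFields A X) (conn : X → X → X)
    (hconn : IsTFFlatConnection V conn) (e : X)
    (hreg : Function.Bijective fun v : X => conn v e) :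
    ∀ mul : X → X → X,
      (∀ x y : X, mul x y
        = - Function.invFun (fun v : X => conn v e) (conn x (conn y e)) + conn x y) →
      ((∀ x y z : X, mul (mul x y) z = mul x (mul y z)) ↔
        (∀ x y z : X,
          conn x (mul y z) - mul y (conn x z) - conn y (mul x z) + mul x (conn y z)
            = mul (V.bracket x y) z)) := by
  intro mul hmul
  have hQmul := hconn.conn_mul_eq_of_eq_invFun hreg.2 hmul
  rw [assoc_iff_left_comm_of_comm (hconn.mul_comm_of_conn_mul hreg.1 hQmul)]
  refine forall₃_congr fun x y z => ?_
  rw [← sub_eq_zero, ← hconn.ASS1_defect_eq_of_conn_mul hreg.1 hQmul, sub_eq_zero]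
end

section
/- Let (𝛁, ⋆, e) be an almost Saito structure on a manifold N with parameter r ∈ ℂ and unit E. Fix λ ∈ ℂ, let I_λ(x) = (E − λe)⋆x, and assume the endomorphism I_λ of the tangent bundle is invertible (working on the open subset N^λ where it has full rank, assumed nonempty). For ν ∈ ℂ define x ⋆_λ y = I_λ^{-1}(x⋆y) and 𝛁^{[λ,ν]}_x y = 𝛁_x y + ν x⋆_λ y + λ 𝛁_{x⋆_λ y} e. Then (𝛁^{[λ,ν]}, ⋆_λ, e) is an almost Saito structure on N^λ with parameter r + ν and unit E − λe. -/
universe u v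

variable {A : Type u} {X : Type v} [CommRing A] [Algebra ℂ A]
  [AddCommGroup X] [Module A X]

/-!
The family is obtained in two steps. Replacing `∇` by `∇ + ν ⋆` preserves every axiom and raises
the parameter by `ν`: the extra curvature is `ν` times the first axiom, and the extra term in the
fourth axiom is `ν` times the second. For the `λ`-deformation write `x ⋆_λ y = w ⋆ x ⋆ y` with
`w = (E - λ e)⁻¹` and `∇' = ∇ + K`, `K(x, y) = λ ∇_{x ⋆_λ y} e`. Each axiom is checked after
multiplying by `E - λ e`, which turns `⋆_λ` back into `⋆` and commutes with `∇ₓ` up to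
`λ (∇_{x ⋆ v} e - x ⋆ ∇_v e - e ⋆ x ⋆ v)` by the second axiom. The only nontrivial identity is
that `∇ ⋆_λ` is symmetric up to such terms; it yields the first axiom for `∇'` and, combined with
`∇ₓ(∇e) = ∇e ∘ ∇ₓ - ∇e ∘ (x ⋆ ·)` (the fourth axiom), the flatness of `∇'`.
-/

namespace VectorFields

variable (V : VectorFields A X)

theorem bracket_sub_left (x y z : X) : V.bracket (x - y) z = V.bracket x z - V.bracket y z :=
  eq_sub_of_add_eq (by rw [← V.bracket_add_left, sub_add_cancel])

theorem bracket_sub_right (x y z : X) : V.bracket x (y - z) = V.bracket x y - V.bracket x z := by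
  rw [V.bracket_antisymm, V.bracket_sub_left, V.bracket_antisymm y, V.bracket_antisymm z]
  abel

theorem bracket_self (x : X) : V.bracket x x = 0 := by
  have two_smul_eq : (2 : A) • V.bracket x x = 0 := by
    rw [two_smul]
    nth_rewrite 1 [V.bracket_antisymm]
    exact neg_add_cancel _
  have two_inv : algebraMap ℂ A 2⁻¹ * 2 = 1 := by
    rw [← map_ofNat (algebraMap ℂ A) 2, ← map_mul, inv_mul_cancel₀ two_ne_zero, map_one]
  rw [← one_smul A (V.bracket x x), ← two_inv, mul_smul, two_smul_eq, smul_zero]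

theorem bracket_algebraMap_smul_self (x : X) (c : ℂ) :
    V.bracket x (algebraMap ℂ A c • x) = 0 := by
  rw [V.bracket_smul_right, V.act_algebraMap, V.bracket_self, zero_smul, smul_zero, zero_add]

end VectorFields

namespace IsUnitalMul

variable {mul : X → X → X} {E : X}

theorem add_right (hm : IsUnitalMul (A := A) mul E) (x y z : X) :
    mul x (y + z) = mul x y + mul x z := by
  rw [hm.comm, hm.add_left, hm.comm y, hm.comm z]

theorem smul_right (hm : IsUnitalMul (A := A) mul E) (f : A) (x y : X) :
    mul x (f • y) = f • mul x y := by
  rw [hm.comm, hm.smul_left, hm.comm y]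

theorem sub_left (hm : IsUnitalMul (A := A) mul E) (x y z : X) :
    mul (x - y) z = mul x z - mul y z :=
  eq_sub_of_add_eq (by rw [← hm.add_left, sub_add_cancel])

theorem sub_right (hm : IsUnitalMul (A := A) mul E) (x y z : X) :
    mul x (y - z) = mul x y - mul x z := by
  rw [hm.comm, hm.sub_left, hm.comm y, hm.comm z]

theorem left_comm (hm : IsUnitalMul (A := A) mul E) (x y z : X) :
    mul x (mul y z) = mul y (mul x z) := by
  rw [← hm.assoc, hm.comm x, hm.assoc]

theorem left_comm_mul (hm : IsUnitalMul (A := A) mul E) (x w y z : X) :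
    mul x (mul w (mul y z)) = mul y (mul w (mul x z)) := by
  rw [hm.left_comm x, hm.left_comm x, hm.left_comm y w, hm.left_comm y x]

theorem zero_right (hm : IsUnitalMul (A := A) mul E) (x : X) : mul x 0 = 0 := by
  simpa using hm.smul_right 0 x 0

theorem unit_right (hm : IsUnitalMul (A := A) mul E) (x : X) : mul x E = x := by
  rw [hm.comm, hm.unit]

def bilin (hm : IsUnitalMul (A := A) mul E) : X →ₗ[A] X →ₗ[A] X :=
  LinearMap.mk₂ A mul hm.add_left hm.smul_left hm.add_right hm.smul_right

section Inverse

variable {u w : X}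

theorem cancel_left (hm : IsUnitalMul (A := A) mul E) (hw : mul u w = E) (x : X) :
    mul w (mul u x) = x := by
  rw [← hm.assoc, hm.comm w, hw, hm.unit]

theorem mul_inv_mul (hm : IsUnitalMul (A := A) mul E) (hw : mul u w = E) (x : X) :
    mul u (mul w x) = x := by
  rw [← hm.assoc, hw, hm.unit]

theorem mul_left_injective (hm : IsUnitalMul (A := A) mul E) (hw : mul u w = E) :
    Function.Injective (mul u) :=
  Function.LeftInverse.injective (g := mul w) (hm.cancel_left hw)

theorem invFun_mul_left (hm : IsUnitalMul (A := A) mul E) (hw : mul u w = E) (x : X) :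
    Function.invFun (fun v : X => mul u v) x = mul w x :=
  hm.mul_left_injective hw
    (by rw [Function.invFun_eq ⟨_, hm.mul_inv_mul hw x⟩, hm.mul_inv_mul hw])

theorem mul_eq_add_smul_mul (hm : IsUnitalMul (A := A) mul E) {e : X} {c : A}
    (hw : mul (E - c • e) w = E) (v : X) : mul w v = v + c • mul e (mul w v) := by
  have hv := hm.mul_inv_mul hw v
  rw [hm.sub_left, hm.unit, hm.smul_left] at hv
  linear_combination (norm := module) hv

theorem twist (hm : IsUnitalMul (A := A) mul E) (hw : mul u w = E) :
    IsUnitalMul (A := A) (fun x y => mul w (mul x y)) u where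
  add_left x y z := by simp only [hm.add_left, hm.add_right]
  smul_left f x y := by simp only [hm.smul_left, hm.smul_right]
  comm x y := by rw [hm.comm x]
  assoc x y z := by simp only [hm.assoc, hm.left_comm w]
  unit x := hm.cancel_left hw x

end Inverse

end IsUnitalMul

/-- `(∇ₓ M)(y, z)`, the covariant derivative of the bilinear map `M`. -/
def covDeriv (conn M : X → X → X) (x y z : X) : X :=
  conn x (M y z) - M (conn x y) z - M y (conn x z)

namespace IsTFFlatConnection

variable {V : VectorFields A X} {conn : X → X → X}

theorem sub_left (hc : IsTFFlatConnection V conn) (x y z : X) :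
    conn (x - y) z = conn x z - conn y z :=
  eq_sub_of_add_eq (by rw [← hc.add_left, sub_add_cancel])

theorem sub_right (hc : IsTFFlatConnection V conn) (x y z : X) :
    conn x (y - z) = conn x y - conn x z :=
  eq_sub_of_add_eq (by rw [← hc.add_right, sub_add_cancel])

theorem algebraMap_smul_right (hc : IsTFFlatConnection V conn) (x y : X) (c : ℂ) :
    conn x (algebraMap ℂ A c • y) = algebraMap ℂ A c • conn x y := by
  rw [hc.leibniz, V.act_algebraMap, zero_smul, zero_add]

def toEnd (hc : IsTFFlatConnection V conn) (v : X) : Module.End A X where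
  toFun x := conn x v
  map_add' x y := hc.add_left x y v
  map_smul' f x := hc.smul_left f x v

/-- By torsion-freeness, the first axiom of an almost Saito structure says that `∇ ⋆` is
symmetric in its first two arguments. -/
theorem ass1_eq_covDeriv_sub (hc : IsTFFlatConnection V conn) {mul : X → X → X} {E : X}
    (hm : IsUnitalMul (A := A) mul E) (x y z : X) :
    conn x (mul y z) - mul y (conn x z) - conn y (mul x z) + mul x (conn y z)
        - mul (V.bracket x y) z
      = covDeriv conn mul x y z - covDeriv conn mul y x z := by
  rw [← hc.torsion_free, hm.sub_left, covDeriv, covDeriv]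
  abel

/-- The curvature of `∇ + K` is that of `∇` plus `(∇ₓK)(y, ·) - (∇_yK)(x, ·) + [Kₓ, K_y]`. -/
theorem add_tensor (hc : IsTFFlatConnection V conn) (K : X →ₗ[A] X →ₗ[A] X)
    (hK : ∀ x y, K x y = K y x)
    (hflat : ∀ x y z, covDeriv conn (K · ·) x y z - covDeriv conn (K · ·) y x z
      + K x (K y z) - K y (K x z) = 0) :
    IsTFFlatConnection V (fun x y => conn x y + K x y) where
  add_left x y z := by simp only [hc.add_left, map_add, LinearMap.add_apply]; abel
  smul_left f x y := by simp only [hc.smul_left, map_smul, LinearMap.smul_apply, smul_add]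
  add_right x y z := by simp only [hc.add_right, map_add]; abel
  leibniz x f y := by simp only [hc.leibniz, map_smul, smul_add]; abel
  torsion_free x y := by rw [← hc.torsion_free, hK]; abel
  flat x y z := by
    have hR := hc.flat x y z
    have hKK := hflat x y z
    rw [← hc.torsion_free, hc.sub_left] at hR
    rw [← hc.torsion_free]
    simp only [covDeriv] at hKK
    simp only [hc.add_right, hc.sub_left, map_add, map_sub, LinearMap.sub_apply]
    linear_combination (norm := module) hR + hKK

end IsTFFlatConnection

namespace IsAlmostSaitoStructure

variable {V : VectorFields A X} {conn mul : X → X → X} {e E : X} {r : ℂ}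

theorem covDeriv_comm (h : IsAlmostSaitoStructure V conn mul e E r) (x y z : X) :
    covDeriv conn mul x y z = covDeriv conn mul y x z := by
  rw [← sub_eq_zero, ← h.conn_flat.ass1_eq_covDeriv_sub h.mul_unital, h.ASS1, sub_self]

theorem covDeriv_e_left (h : IsAlmostSaitoStructure V conn mul e E r) (x y : X) :
    covDeriv conn mul x e y
      = conn (mul x y) e - mul (conn x e) y - mul x (conn y e) - mul e (mul x y) := by
  have h2 := h.ASS2 x y
  simp only [← h.conn_flat.torsion_free, h.mul_unital.sub_left, h.mul_unital.sub_right] at h2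
  rw [h.covDeriv_comm, covDeriv]
  linear_combination (norm := module) h2

theorem add_smul_mul (h : IsAlmostSaitoStructure V conn mul e E r) (ν : ℂ) :
    IsAlmostSaitoStructure V (fun x y => conn x y + algebraMap ℂ A ν • mul x y) mul e E
      (r + ν) := by
  have hm := h.mul_unital
  have hc := h.conn_flat
  refine ⟨?_, hm, h.e_ne_zero, fun x y z => ?_, h.ASS2, fun x => ?_, fun x y => ?_⟩
  · refine hc.add_tensor (algebraMap ℂ A ν • hm.bilin) (fun x y => ?_) (fun x y z => ?_)
    · simp [IsUnitalMul.bilin, hm.comm x]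
    · have hsymm := h.covDeriv_comm x y z
      simp only [covDeriv] at hsymm
      simp only [covDeriv, IsUnitalMul.bilin, LinearMap.smul_apply, LinearMap.mk₂_apply,
        hc.algebraMap_smul_right, hm.smul_right]
      linear_combination (norm := module) algebraMap ℂ A ν • hsymm
        + (algebraMap ℂ A ν * algebraMap ℂ A ν) • hm.left_comm x y z
  · simp only [hm.smul_right, hm.add_right]
    linear_combination (norm := module) h.ASS1 x y z + (2 * algebraMap ℂ A ν) • hm.left_comm x y z
  · rw [hm.unit_right, h.ASS3, map_add, add_smul]
  · have h4 := h.ASS4 x y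
    have hce := h.covDeriv_e_left x y
    rw [covDeriv] at hce
    simp only [hc.add_right, hc.add_left, hm.smul_left, hm.smul_right, hm.add_right, hm.add_left,
      hc.algebraMap_smul_right, hc.smul_left]
    linear_combination (norm := module) h4
      + algebraMap ℂ A ν • (hce + congrArg (conn x) (hm.comm y e) - hm.comm (conn x y) e
        + hm.comm (mul x y) e)
      - (algebraMap ℂ A ν * algebraMap ℂ A ν) • hm.assoc x y e

theorem bracket_e_unit (h : IsAlmostSaitoStructure V conn mul e E r) : V.bracket e E = e := by
  have h2 := h.ASS2 E E
  rw [h.mul_unital.unit, h.mul_unital.unit_right, h.mul_unital.unit, h.mul_unital.unit_right]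
    at h2
  linear_combination (norm := module) -h2

theorem conn_conn_e (h : IsAlmostSaitoStructure V conn mul e E r) (x y : X) :
    conn x (conn y e) = conn (conn x y) e - conn (mul x y) e := by
  linear_combination (norm := module) h.ASS4 x y

theorem mul_conn (h : IsAlmostSaitoStructure V conn mul e E r) (lam : ℂ) (x v : X) :
    mul (E - algebraMap ℂ A lam • e) (conn x v)
      = conn x (mul (E - algebraMap ℂ A lam • e) v)
        + algebraMap ℂ A lam • (conn (mul x v) e - mul x (conn v e) - mul e (mul x v)) := by
  have hce := h.covDeriv_e_left x v
  rw [covDeriv] at hce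
  simp only [h.mul_unital.sub_left, h.mul_unital.unit, h.mul_unital.smul_left,
    h.conn_flat.sub_right, h.conn_flat.algebraMap_smul_right]
  linear_combination (norm := module) algebraMap ℂ A lam • hce

section Twist

variable {lam : ℂ} {w : X}

theorem mul_covDeriv_twist (h : IsAlmostSaitoStructure V conn mul e E r)
    (hw : mul (E - algebraMap ℂ A lam • e) w = E) (x y z : X) :
    mul (E - algebraMap ℂ A lam • e) (covDeriv conn (fun a b => mul w (mul a b)) x y z)
      = covDeriv conn mul x y z + algebraMap ℂ A lam • (conn (mul x (mul w (mul y z))) e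
        - mul x (conn (mul w (mul y z)) e) - mul e (mul x (mul w (mul y z)))) := by
  rw [covDeriv, h.mul_unital.sub_right, h.mul_unital.sub_right, h.mul_conn,
    h.mul_unital.mul_inv_mul hw, h.mul_unital.mul_inv_mul hw, h.mul_unital.mul_inv_mul hw,
    covDeriv]
  abel

/-- Multiplying by `E - λ e` reduces this to the first axiom for `⋆`. It gives the first axiom of
the deformed structure and, through `∇e`, its flatness. -/
theorem covDeriv_twist_sub (h : IsAlmostSaitoStructure V conn mul e E r)
    (hw : mul (E - algebraMap ℂ A lam • e) w = E) (x y z : X) :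
    covDeriv conn (fun a b => mul w (mul a b)) x y z
        - covDeriv conn (fun a b => mul w (mul a b)) y x z
      = algebraMap ℂ A lam • (mul w (mul y (conn (mul w (mul x z)) e))
        - mul w (mul x (conn (mul w (mul y z)) e))) := by
  have hm := h.mul_unital
  apply hm.mul_left_injective hw
  rw [hm.sub_right, hm.smul_right, hm.sub_right, hm.mul_inv_mul hw, hm.mul_inv_mul hw,
    h.mul_covDeriv_twist hw, h.mul_covDeriv_twist hw, h.covDeriv_comm x y,
    h.mul_unital.left_comm_mul x w y z]
  module

theorem ass2_twist (h : IsAlmostSaitoStructure V conn mul e E r)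
    (hw : mul (E - algebraMap ℂ A lam • e) w = E) (x y : X) :
    V.bracket e (mul w (mul x y)) - mul w (mul (V.bracket e x) y)
        - mul w (mul x (V.bracket e y)) + mul w (mul e (mul w (mul x y))) = 0 := by
  have hm := h.mul_unital
  have hu : V.bracket e (E - algebraMap ℂ A lam • e) = e := by
    rw [V.bracket_sub_right, h.bracket_e_unit, V.bracket_algebraMap_smul_self, sub_zero]
  have h2 := h.ASS2 (E - algebraMap ℂ A lam • e) (mul w (mul x y))
  rw [hu, hm.mul_inv_mul hw] at h2
  apply hm.mul_left_injective hw
  rw [hm.zero_right, hm.add_right, hm.sub_right, hm.sub_right, hm.mul_inv_mul hw,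
    hm.mul_inv_mul hw, hm.mul_inv_mul hw]
  linear_combination (norm := module) h.ASS2 x y - h2

theorem conn_twist_e (h : IsAlmostSaitoStructure V conn mul e E r)
    (hw : mul (E - algebraMap ℂ A lam • e) w = E) (v : X) :
    conn v e + algebraMap ℂ A lam • conn (mul w (mul v e)) e = conn (mul w v) e := by
  conv_rhs => rw [h.mul_unital.mul_eq_add_smul_mul hw v]
  rw [h.conn_flat.add_left, h.conn_flat.smul_left, h.mul_unital.comm v,
    h.mul_unital.left_comm w]

theorem conn_mul_inv (h : IsAlmostSaitoStructure V conn mul e E r)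
    (hw : mul (E - algebraMap ℂ A lam • e) w = E) (x y : X) :
    conn x (mul w y) = mul w (conn x y) + algebraMap ℂ A lam • mul w (conn (mul x (mul w y)) e
      - mul x (conn (mul w y) e) - mul e (mul x (mul w y))) := by
  have hm := h.mul_unital
  rw [← hm.cancel_left hw (conn x (mul w y)), h.mul_conn, hm.mul_inv_mul hw, hm.add_right,
    hm.smul_right]

theorem flat_twist (h : IsAlmostSaitoStructure V conn mul e E r)
    (hw : mul (E - algebraMap ℂ A lam • e) w = E) (x y z : X) :
    covDeriv conn (fun a b => algebraMap ℂ A lam • conn (mul w (mul a b)) e) x y z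
      - covDeriv conn (fun a b => algebraMap ℂ A lam • conn (mul w (mul a b)) e) y x z
      + algebraMap ℂ A lam • conn (mul w (mul x (algebraMap ℂ A lam • conn (mul w (mul y z)) e))) e
      - algebraMap ℂ A lam • conn (mul w (mul y (algebraMap ℂ A lam • conn (mul w (mul x z)) e))) e
      = 0 := by
  have hc := h.conn_flat
  have hkey := congrArg (conn · e) (h.covDeriv_twist_sub hw x y z)
  simp only [covDeriv, hc.sub_left, hc.smul_left] at hkey
  simp only [covDeriv, hc.algebraMap_smul_right, h.conn_conn_e, h.mul_unital.smul_right,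
    hc.smul_left]
  linear_combination (norm := module) algebraMap ℂ A lam • hkey
    - algebraMap ℂ A lam • congrArg (conn · e) (h.mul_unital.left_comm_mul x w y z)

/-- With `w = (E - λ e)⁻¹` this is the paper's `(∇^{[λ,0]}, ⋆_λ, e)`. -/
theorem twist (h : IsAlmostSaitoStructure V conn mul e E r)
    (hw : mul (E - algebraMap ℂ A lam • e) w = E) :
    IsAlmostSaitoStructure V
      (fun x y => conn x y + algebraMap ℂ A lam • conn (mul w (mul x y)) e)
      (fun x y => mul w (mul x y)) e (E - algebraMap ℂ A lam • e) r := by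
  have hm := h.mul_unital
  have hc := h.conn_flat
  have hP := hm.twist hw
  have hc' : IsTFFlatConnection V
      (fun x y => conn x y + algebraMap ℂ A lam • conn (mul w (mul x y)) e) :=
    hc.add_tensor (algebraMap ℂ A lam • hP.bilin.compr₂ (hc.toEnd e))
      (fun x y => show algebraMap ℂ A lam • conn (mul w (mul x y)) e
          = algebraMap ℂ A lam • conn (mul w (mul y x)) e by rw [hm.comm x])
      (h.flat_twist hw)
  refine ⟨hc', hP, h.e_ne_zero, fun x y z => ?_, h.ass2_twist hw, fun x => ?_, fun x y => ?_⟩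
  · have hkey := h.covDeriv_twist_sub hw x y z
    rw [← sub_eq_zero, hc'.ass1_eq_covDeriv_sub hP]
    simp only [covDeriv] at hkey ⊢
    simp only [hm.add_left, hm.add_right, hm.smul_left, hm.smul_right]
    linear_combination (norm := module) hkey
      + algebraMap ℂ A lam • congrArg (conn · e) (hP.left_comm x y z)
      - algebraMap ℂ A lam • congrArg (fun v => mul w (mul (conn (mul w v) e) z)) (hm.comm x y)
  · rw [hm.comm x, hm.cancel_left hw, hc.sub_right, h.ASS3, hc.algebraMap_smul_right]
    abel
  · have hinv := congrArg (conn · e) (congrArg (mul w) (hm.mul_eq_add_smul_mul hw (mul x y)))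
    simp only [hm.add_right, hm.smul_right, hc.add_left, hc.smul_left] at hinv
    simp only [h.conn_twist_e hw]
    rw [h.conn_conn_e, h.conn_mul_inv hw]
    simp only [hc.add_left, hc.sub_left, hc.smul_left, hm.add_right, hm.sub_right,
      hm.smul_right, hm.left_comm x w]
    linear_combination (norm := module) hinv

end Twist

end IsAlmostSaitoStructure

/-- Proposition 2.9 of the paper: the two-parameter family of almost Saito
structures attached to a given almost Saito structure. Here
`I_λ x = (E - λe) ⋆ x` is assumed invertible (we work on the subset `N^λ`
where it has full rank), `x ⋆_λ y = I_λ⁻¹ (x ⋆ y)` and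
`∇^{[λ,ν]}_x y = ∇ₓ y + ν x ⋆_λ y + λ ∇_{x ⋆_λ y} e`. -/
theorem almost_saito_two_parameter_family
    (V : VectorFields A X) (conn mul : X → X → X) (e E : X) (r lam nu : ℂ)
    (h : IsAlmostSaitoStructure V conn mul e E r)
    (hreg : Function.Bijective fun v : X => mul (E - algebraMap ℂ A lam • e) v) :
    ∀ mulLam connLamNu : X → X → X,
      (∀ x y : X, mulLam x y
        = Function.invFun (fun v : X => mul (E - algebraMap ℂ A lam • e) v) (mul x y)) →
      (∀ x y : X, connLamNu x y
        = conn x y + algebraMap ℂ A nu • mulLam x y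
          + algebraMap ℂ A lam • conn (mulLam x y) e) →
      IsAlmostSaitoStructure V connLamNu mulLam e (E - algebraMap ℂ A lam • e) (r + nu) := by
  intro mulLam connLamNu hmulLam hconnLamNu
  obtain ⟨w, hw⟩ := hreg.surjective E
  have hmul : mulLam = fun x y => mul w (mul x y) := by
    funext x y
    rw [hmulLam, h.mul_unital.invFun_mul_left hw]
  have hconn : connLamNu = fun x y => conn x y + algebraMap ℂ A lam • conn (mul w (mul x y)) e
      + algebraMap ℂ A nu • mul w (mul x y) := by
    funext x y
    rw [hconnLamNu, hmul, add_right_comm]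
  rw [hconn, hmul]
  exact (h.twist hw).add_smul_mul nu
end
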